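/- arXiv:math-ph/0612034 — 2 statements merged into one kernel-verified Lean document; each statement's English description precedes it below -/
import Mathlib

section
/- A semi-free S¹-space X is completely specified up to S¹-equivariant homeomorphism by the subset F ⊆ B = X/S¹ over which the fixed points lie together with the isomorphism class of the principal S¹-bundle (X − π⁻¹(F)) → (B − F), where π : X → B is the quotient map; equivalently, by F ⊂ B and a class λ ∈ H²(B−F, ℤ). -/
/-!
STATEMENT 1: A semi-free `S¹`-space `X` is completely specified up to
`S¹`-equivariant homeomorphism by the subset `F ⊆ B = X/S¹` over which the fixed
points lie together with the isomorphism class of the principal `S¹`-bundle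
`(X − π⁻¹(F)) → (B − F)`, where `π : X → B` is the quotient map; equivalently, by
`F ⊂ B` and a class `λ ∈ H²(B−F, ℤ)`.

The classification of principal `S¹`-bundles over `B−F` by `H²(B−F,ℤ)` (CONTEXT)
is taken as abstract data: a group `H2` together with a class map `bundleClass` such
that two semi-free spaces over `(B,F)` have equal classes iff their free parts are
`S¹`-equivariantly homeomorphic over `B−F`.
-/

/-- A semi-free `S¹`-space over `B`, with fixed points lying over `F ⊆ B`. -/
structure SemiFreeSpaceOver (B : Type*) [TopologicalSpace B] (F : Set B) where
  X : Type*
  [topX : TopologicalSpace X]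
  [mulX : MulAction Circle X]
  continuous_smul : Continuous fun p : Circle × X => p.1 • p.2
  /-- the quotient map `π : X → B = X/S¹` -/
  π : X → B
  quotient : Topology.IsQuotientMap π
  orbit_eq : ∀ x y : X, π x = π y ↔ y ∈ MulAction.orbit Circle x
  /-- semi-freeness: every orbit is free or a fixed point -/
  semifree : ∀ x : X,
    MulAction.stabilizer Circle x = ⊥ ∨ MulAction.stabilizer Circle x = ⊤
  /-- the fixed points are exactly the points lying over `F` -/
  fixed_over : ∀ x : X, MulAction.stabilizer Circle x = ⊤ ↔ π x ∈ F

attribute [instance] SemiFreeSpaceOver.topX SemiFreeSpaceOver.mulX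

variable {B : Type*} [TopologicalSpace B] {F : Set B}

/-- An `S¹`-equivariant homeomorphism over `B` between two semi-free spaces. -/
def SemiFreeSpaceOver.EquivHomeo (X₁ X₂ : SemiFreeSpaceOver B F) : Prop :=
  ∃ h : X₁.X ≃ₜ X₂.X,
    (∀ (g : Circle) (x : X₁.X), h (g • x) = g • h x) ∧
    ∀ x : X₁.X, X₂.π (h x) = X₁.π x

/-- An `S¹`-equivariant homeomorphism over `B−F` between the free parts
`X − π⁻¹(F)` of two semi-free spaces, i.e. an isomorphism of the associated
principal `S¹`-bundles over `B−F`. -/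
def SemiFreeSpaceOver.FreePartIso (X₁ X₂ : SemiFreeSpaceOver B F) : Prop :=
  ∃ h : {x : X₁.X // X₁.π x ∉ F} ≃ₜ {x : X₂.X // X₂.π x ∉ F},
    (∀ (g : Circle) (x : {x : X₁.X // X₁.π x ∉ F}) (hg : X₁.π (g • x.1) ∉ F),
      (h ⟨g • x.1, hg⟩).1 = g • (h x).1) ∧
    ∀ x, X₂.π (h x).1 = X₁.π x.1


/-!
Over `B − F` the two spaces are identified by the given bundle isomorphism, and over a
point of `F` each has a single (fixed) point, so the isomorphism extends uniquely to a
bijection over `B`. It is continuous at free points because `π` is open and fibres over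
`F` are points, and at fixed points because, `S¹` being compact, every neighbourhood of a
fixed point contains an invariant one.
-/

theorem isOpen_setOf_forall_smul_mem {G Y : Type*} [TopologicalSpace G] [CompactSpace G]
    [TopologicalSpace Y] [SMul G Y] [ContinuousSMul G Y] {V : Set Y} (hV : IsOpen V) :
    IsOpen {y : Y | ∀ g : G, g • y ∈ V} := by
  have hclosed : IsClosed (Prod.snd '' {p : G × Y | p.1 • p.2 ∉ V}) :=
    isClosedMap_snd_of_compactSpace _ (hV.isClosed_compl.preimage continuous_smul)
  convert hclosed.isOpen_compl using 1
  ext y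
  simp

namespace SemiFreeSpaceOver

section OneSpace

open scoped Pointwise

variable (X : SemiFreeSpaceOver B F)

instance : ContinuousSMul Circle X.X := ⟨X.continuous_smul⟩

theorem π_smul (g : Circle) (x : X.X) : X.π (g • x) = X.π x :=
  ((X.orbit_eq x (g • x)).mpr ⟨g, rfl⟩).symm

variable {X}

theorem exists_smul_eq_of_π_eq {x y : X.X} (h : X.π x = X.π y) : ∃ g : Circle, g • x = y :=
  MulAction.mem_orbit_iff.mp ((X.orbit_eq x y).mp h)

theorem smul_eq_self_of_π_mem {x : X.X} (hx : X.π x ∈ F) (g : Circle) : g • x = x := by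
  have hg : g ∈ MulAction.stabilizer Circle x := (X.fixed_over x).mpr hx ▸ Subgroup.mem_top g
  exact hg

theorem eq_of_π_eq_of_π_mem {x y : X.X} (hx : X.π x ∈ F) (h : X.π x = X.π y) : x = y := by
  obtain ⟨g, rfl⟩ := exists_smul_eq_of_π_eq h
  exact (smul_eq_self_of_π_mem hx g).symm

variable (X)

theorem preimage_image_π (V : Set X.X) : X.π ⁻¹' (X.π '' V) = ⋃ g : Circle, g • V := by
  ext y
  simp only [Set.mem_preimage, Set.mem_image, Set.mem_iUnion, Set.mem_smul_set]
  constructor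
  · rintro ⟨x, hx, hxy⟩
    obtain ⟨g, rfl⟩ := exists_smul_eq_of_π_eq hxy
    exact ⟨g, x, hx, rfl⟩
  · rintro ⟨g, x, hx, rfl⟩
    exact ⟨x, hx, (X.π_smul g x).symm⟩

theorem isOpenMap_π : IsOpenMap X.π := fun V hV => by
  rw [← X.quotient.isOpen_preimage, preimage_image_π]
  exact isOpen_iUnion fun g => hV.smul g

end OneSpace

variable {X₁ X₂ : SemiFreeSpaceOver B F}

theorem continuousAt_of_π_comp_eq_of_π_mem {H : X₁.X → X₂.X} (hH : ∀ x, X₂.π (H x) = X₁.π x)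
    {x : X₁.X} (hx : X₁.π x ∈ F) : ContinuousAt H x := by
  refine tendsto_nhds.mpr fun V hV hxV => ?_
  set W := {y : X₂.X | ∀ g : Circle, g • y ∈ V}
  have hW : IsOpen W := isOpen_setOf_forall_smul_mem hV
  have hxW : H x ∈ W := fun g => by
    rwa [smul_eq_self_of_π_mem ((hH x).symm ▸ hx)]
  refine Filter.mem_of_superset
    ((X₂.isOpenMap_π W hW).preimage X₁.quotient.continuous |>.mem_nhds ⟨H x, hxW, hH x⟩) ?_
  rintro z ⟨w, hwW, hwz⟩
  obtain ⟨g, hg⟩ := exists_smul_eq_of_π_eq (hwz.trans (hH z).symm)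
  rw [Set.mem_preimage, ← hg]
  exact hwW g

theorem continuousAt_of_π_comp_eq_of_continuousOn {H : X₁.X → X₂.X}
    (hH : ∀ x, X₂.π (H x) = X₁.π x) (hfree : ContinuousOn H {x | X₁.π x ∉ F})
    {x : X₁.X} (hx : X₁.π x ∉ F) : ContinuousAt H x := by
  refine tendsto_nhds.mpr fun V hV hxV => ?_
  obtain ⟨U, hU, hUV⟩ :=
    mem_nhdsWithin_iff_exists_mem_nhds_inter.mp (hfree x hx |>.preimage_mem_nhdsWithin
      (hV.mem_nhds hxV))
  have hfib : X₁.π ⁻¹' (X₂.π '' V) ∈ nhds x :=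
    (X₂.isOpenMap_π V hV).preimage X₁.quotient.continuous |>.mem_nhds ⟨H x, hxV, hH x⟩
  refine Filter.mem_of_superset (Filter.inter_mem hU hfib) ?_
  rintro z ⟨hzU, v, hvV, hvz⟩
  by_cases hz : X₁.π z ∈ F
  · rwa [eq_of_π_eq_of_π_mem (hvz ▸ hz) (hvz.trans (hH z).symm)] at hvV
  · exact hUV ⟨hzU, hz⟩

theorem continuous_of_π_comp_eq_of_continuousOn {H : X₁.X → X₂.X}
    (hH : ∀ x, X₂.π (H x) = X₁.π x) (hfree : ContinuousOn H {x | X₁.π x ∉ F}) :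
    Continuous H :=
  continuous_iff_continuousAt.mpr fun x => by
    by_cases hx : X₁.π x ∈ F
    · exact continuousAt_of_π_comp_eq_of_π_mem hH hx
    · exact continuousAt_of_π_comp_eq_of_continuousOn hH hfree hx

open Classical in
noncomputable def extend (e : {x : X₁.X // X₁.π x ∉ F} → {x : X₂.X // X₂.π x ∉ F})
    (x : X₁.X) : X₂.X :=
  if hx : X₁.π x ∈ F then (X₂.quotient.surjective (X₁.π x)).choose else (e ⟨x, hx⟩).1

section Extend

variable {e : {x : X₁.X // X₁.π x ∉ F} → {x : X₂.X // X₂.π x ∉ F}}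

theorem extend_of_π_notMem {x : X₁.X} (hx : X₁.π x ∉ F) : extend e x = (e ⟨x, hx⟩).1 :=
  dif_neg hx

theorem π_extend (he : ∀ x, X₂.π (e x).1 = X₁.π x.1) (x : X₁.X) :
    X₂.π (extend e x) = X₁.π x := by
  by_cases hx : X₁.π x ∈ F
  · rw [extend, dif_pos hx]
    exact (X₂.quotient.surjective (X₁.π x)).choose_spec
  · rw [extend_of_π_notMem hx, he]

theorem leftInverse_extend {e' : {x : X₂.X // X₂.π x ∉ F} → {x : X₁.X // X₁.π x ∉ F}}
    (he : ∀ x, X₂.π (e x).1 = X₁.π x.1) (he' : ∀ x, X₁.π (e' x).1 = X₂.π x.1)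
    (hinv : Function.LeftInverse e' e) : Function.LeftInverse (extend e') (extend e) := by
  intro x
  by_cases hx : X₁.π x ∈ F
  · exact (eq_of_π_eq_of_π_mem hx (by rw [π_extend he', π_extend he])).symm
  · have hex : X₂.π (e ⟨x, hx⟩).1 ∉ F := he ⟨x, hx⟩ ▸ hx
    rw [extend_of_π_notMem hx, extend_of_π_notMem hex, hinv]

theorem continuous_extend (hcont : Continuous e) (he : ∀ x, X₂.π (e x).1 = X₁.π x.1) :
    Continuous (extend e) :=
  continuous_of_π_comp_eq_of_continuousOn (π_extend he) <|
    continuousOn_iff_continuous_domRestrict.mpr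
      ((continuous_subtype_val.comp hcont).congr fun x => (extend_of_π_notMem x.2).symm)

theorem extend_smul (he : ∀ x, X₂.π (e x).1 = X₁.π x.1)
    (hsmul : ∀ (g : Circle) (x : {x : X₁.X // X₁.π x ∉ F}) (hg : X₁.π (g • x.1) ∉ F),
      (e ⟨g • x.1, hg⟩).1 = g • (e x).1)
    (g : Circle) (x : X₁.X) : extend e (g • x) = g • extend e x := by
  by_cases hx : X₁.π x ∈ F
  · rw [smul_eq_self_of_π_mem hx, smul_eq_self_of_π_mem ((π_extend he x).symm ▸ hx)]
  · have hgx : X₁.π (g • x) ∉ F := (X₁.π_smul g x).symm ▸ hx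
    rw [extend_of_π_notMem hgx, extend_of_π_notMem hx]
    exact hsmul g ⟨x, hx⟩ hgx

end Extend

theorem FreePartIso.equivHomeo (h : X₁.FreePartIso X₂) : X₁.EquivHomeo X₂ := by
  obtain ⟨e, hsmul, he⟩ := h
  have he' : ∀ y, X₁.π (e.symm y).1 = X₂.π y.1 := fun y => by
    rw [← he (e.symm y), e.apply_symm_apply]
  refine ⟨⟨⟨extend e, extend e.symm, leftInverse_extend he he' e.left_inv,
      leftInverse_extend he' he e.right_inv⟩, continuous_extend e.continuous he,
      continuous_extend e.symm.continuous he'⟩, extend_smul he hsmul, π_extend he⟩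

end SemiFreeSpaceOver

theorem statement1_general
    (B : Type*) [TopologicalSpace B] (F : Set B)
    -- `H²(B−F, ℤ)` together with the classification of principal `S¹`-bundles
    -- over `B−F`: equal classes iff isomorphic bundles (equivariantly over `B−F`)
    (H2 : Type*)
    (bundleClass : SemiFreeSpaceOver B F → H2)
    (hclassifies : ∀ X₁ X₂ : SemiFreeSpaceOver B F,
      bundleClass X₁ = bundleClass X₂ ↔ X₁.FreePartIso X₂) :
    -- the classification: equal data `(F, λ)` ⇒ equivariantly homeomorphic
    ∀ X₁ X₂ : SemiFreeSpaceOver B F,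
      bundleClass X₁ = bundleClass X₂ → X₁.EquivHomeo X₂ :=
  fun X₁ X₂ hclass => ((hclassifies X₁ X₂).mp hclass).equivHomeo

theorem statement1
    (B : Type*) [TopologicalSpace B] (F : Set B)
    -- `H²(B−F, ℤ)` together with the classification of principal `S¹`-bundles
    -- over `B−F`: equal classes iff isomorphic bundles (equivariantly over `B−F`)
    (H2 : Type*) [AddCommGroup H2]
    (bundleClass : SemiFreeSpaceOver B F → H2)
    (hclassifies : ∀ X₁ X₂ : SemiFreeSpaceOver B F,
      bundleClass X₁ = bundleClass X₂ ↔ X₁.FreePartIso X₂) :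
    -- the classification: equal data `(F, λ)` ⇒ equivariantly homeomorphic
    ∀ X₁ X₂ : SemiFreeSpaceOver B F,
      bundleClass X₁ = bundleClass X₂ → X₁.EquivHomeo X₂ :=
  statement1_general B F H2 bundleClass hclassifies
end

section
/- Apply Buscher's rules to Taub–NUT space with metric g_TN (with g₀₀ = H⁻¹, H(r) = g⁻² + (2r)⁻¹) and B-field B = βΩ = β d( (1/(g²H))(dκ + ((1−cosθ)/2)dφ) ), so that b₀₁ = −βH′/(g²H²). Then the T-dual metric satisfies g̃₀₀ = H, g̃₀₁ = −βH′/(g²H), and g̃ = H(r)(d(κ + β/(g²H)))² + {terms not involving dκ}. Consequently the diffeomorphism Γ : ℝ³ × S¹ → ℝ³ × S¹, Γ(r,θ,φ,κ) = (r, θ, φ, κ + β/(g²H(r))), satisfies g̃(r,θ,φ,κ) = Γ*(g_H(r,θ,φ,K)), i.e. Γ is an isometric diffeomorphism between the Riemannian manifolds (ℝ³ × S¹, g_H) and (ℝ³ × S¹, g̃); as r → ∞, Γ approaches the isometry κ ↦ κ + β. The modified diffeomorphism Λ with κ̃ = κ + β/(g²H(r)) − β approaches the identity as r → ∞ and satisfies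 g̃(r,θ,φ,κ) = Λ*(g_H(r,θ,φ, κ̃ + β)). -/
/-!
Relative to the `B = 0` dual `M`, Buscher's rules only put `b₀α/g₀₀` in the `κ`-row and add
`b₀αb₀β/g₀₀` to the other block.  Since `M₀₀ = 1/g₀₀` and `M₀α = 0`, a B-field whose
`κ`-row is `s dr` gives exactly `Jᵀ M J`, with `J` the Jacobian of the shear
`dκ ↦ dκ + s dr`.  At `B = 0` the dual of Taub–NUT is the `H`-monopole, and for
`B = β dΛ` the `κ`-row is `b₀₁ dr` with `b₀₁ = (β/(g²H))′`, exactly the shear of `Γ`.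
The asymptotics follow from `H(r) → g⁻²`.
-/

open Real

/-- Buscher's rules. -/
noncomputable def buscher (g b : Matrix (Fin 4) (Fin 4) ℝ) : Matrix (Fin 4) (Fin 4) ℝ :=
  fun i j =>
    if i = 0 ∧ j = 0 then 1 / g 0 0
    else if i = 0 then b 0 j / g 0 0
    else if j = 0 then b 0 i / g 0 0
    else g i j - (g 0 i * g 0 j - b 0 i * b 0 j) / g 0 0

/-- `H(r) = g⁻² + (2r)⁻¹`. -/
noncomputable def taubNutH (gc r : ℝ) : ℝ := gc⁻¹ ^ 2 + (2 * r)⁻¹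

/-- The Taub–NUT metric in the coordinates `(κ,r,θ,φ)`. -/
noncomputable def gTN (gc r θ : ℝ) : Matrix (Fin 4) (Fin 4) ℝ :=
  let H := taubNutH gc r
  ![![H⁻¹, 0, 0, H⁻¹ * (1 - cos θ)],
    ![0, H, 0, 0],
    ![0, 0, H * r ^ 2, 0],
    ![H⁻¹ * (1 - cos θ), 0, 0,
      H * r ^ 2 * sin θ ^ 2 + H⁻¹ * (1 - cos θ) ^ 2]]

/-- The `H`-monopole metric `g_H = H (dκ² + dr⃗·dr⃗)` (T-dual of `g_TN` at `B = 0`);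
it does not involve `κ`, hence is invariant under shifts `κ ↦ κ + const`. -/
noncomputable def gH (gc r θ : ℝ) : Matrix (Fin 4) (Fin 4) ℝ :=
  let H := taubNutH gc r
  ![![H, 0, 0, 0],
    ![0, H, 0, 0],
    ![0, 0, H * r ^ 2, 0],
    ![0, 0, 0, H * r ^ 2 * sin θ ^ 2]]

/-- The B-field `B = βΩ = β d((1/(g²H))(dκ + ((1−cosθ)/2) dφ))
  = −(βH′/(g²H²)) dr ∧ (dκ + ((1−cosθ)/2) dφ) − (β/(g²H)) sinθ dθ ∧ dφ`,
recorded (following the paper) with `b₀₁ = −βH′/(g²H²)`. -/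
noncomputable def bOmega (gc β r θ : ℝ) : Matrix (Fin 4) (Fin 4) ℝ :=
  let H := taubNutH gc r
  let H' := deriv (taubNutH gc) r
  let b01 : ℝ := -(β * H') / (gc ^ 2 * H ^ 2)
  let b13 : ℝ := b01 * ((1 - cos θ) / 2)
  let b23 : ℝ := -(β / (gc ^ 2 * H)) * sin θ
  ![![0, b01, 0, 0],
    ![-b01, 0, 0, b13],
    ![0, 0, 0, b23],
    ![0, -b13, -b23, 0]]

/-- The Jacobian matrix of `Γ(r,θ,φ,κ) = (r,θ,φ, κ + β/(g²H(r)))` in the coordinates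
`(κ,r,θ,φ)`: the identity except that `dK = dκ + (β/(g²H))′ dr`.  `Λ` differs from `Γ`
by a constant shift of `κ`, so it has the same Jacobian. -/
noncomputable def jacGamma (gc β r : ℝ) : Matrix (Fin 4) (Fin 4) ℝ :=
  ![![1, deriv (fun s => β / (gc ^ 2 * taubNutH gc s)) r, 0, 0],
    ![0, 1, 0, 0],
    ![0, 0, 1, 0],
    ![0, 0, 0, 1]]

open scoped Matrix

lemma buscher_eq_transpose_mul_mul (g b : Matrix (Fin 4) (Fin 4) ℝ) (s : ℝ)
    (hb : b 0 = Pi.single 1 s) :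
    buscher g b =
      (1 + Matrix.single 0 1 s)ᵀ * buscher g 0 * (1 + Matrix.single 0 1 s) := by
  have hb' (j : Fin 4) : b 0 j = Pi.single (M := fun _ => ℝ) 1 s j := congrFun hb j
  ext i j
  fin_cases i <;> fin_cases j <;>
    simp [buscher, hb', Matrix.mul_apply, Fin.sum_univ_four, Matrix.single_apply] <;> ring

lemma taubNutH_pos (gc : ℝ) {r : ℝ} (hr : 0 < r) : 0 < taubNutH gc r := by
  unfold taubNutH; positivity

lemma hasDerivAt_taubNutH (gc : ℝ) {r : ℝ} (hr : r ≠ 0) :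
    HasDerivAt (taubNutH gc) (-(2 * r ^ 2)⁻¹) r := by
  have h2r : HasDerivAt (fun s : ℝ => 2 * s) 2 r := by
    simpa using (hasDerivAt_id r).const_mul 2
  refine ((h2r.fun_inv (by positivity)).const_add (gc⁻¹ ^ 2)).congr_deriv ?_
  field_simp

lemma tendsto_taubNutH_atTop (gc : ℝ) :
    Filter.Tendsto (taubNutH gc) Filter.atTop (nhds (gc⁻¹ ^ 2)) := by
  have h := (Filter.tendsto_id.const_mul_atTop two_pos).inv_tendsto_atTop.const_add (gc⁻¹ ^ 2)
  rwa [add_zero] at h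

lemma buscher_gTN_zero (gc : ℝ) {r : ℝ} (hr : 0 < r) (θ : ℝ) :
    buscher (gTN gc r θ) 0 = gH gc r θ := by
  have hH := (taubNutH_pos gc hr).ne'
  ext i j
  fin_cases i <;> fin_cases j <;> simp [buscher, gTN, gH]
  field_simp
  ring

lemma bOmega_row_zero (gc β r θ : ℝ) :
    bOmega gc β r θ 0 =
      Pi.single 1 (-(β * deriv (taubNutH gc) r) / (gc ^ 2 * taubNutH gc r ^ 2)) := by
  ext j; fin_cases j <;> simp [bOmega]

lemma deriv_div_taubNutH {gc : ℝ} (hgc : gc ≠ 0) (β : ℝ) {r : ℝ} (hr : 0 < r) :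
    deriv (fun s => β / (gc ^ 2 * taubNutH gc s)) r =
      -(β * deriv (taubNutH gc) r) / (gc ^ 2 * taubNutH gc r ^ 2) := by
  have hH := (hasDerivAt_taubNutH gc hr.ne').differentiableAt
  rw [deriv_const_div β (hH.const_mul _) (by positivity [taubNutH_pos gc hr]),
    deriv_const_mul _ hH]
  field_simp

lemma jacGamma_eq_one_add_single (gc β r : ℝ) :
    jacGamma gc β r =
      1 + Matrix.single 0 1 (deriv (fun s => β / (gc ^ 2 * taubNutH gc s)) r) := by
  ext i j; fin_cases i <;> fin_cases j <;> simp [jacGamma]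

lemma tendsto_div_taubNutH_atTop {gc : ℝ} (hgc : gc ≠ 0) (β : ℝ) :
    Filter.Tendsto (fun r => β / (gc ^ 2 * taubNutH gc r)) Filter.atTop (nhds β) := by
  have h : Filter.Tendsto (fun r => β / (gc ^ 2 * taubNutH gc r)) Filter.atTop
      (nhds (β / (gc ^ 2 * gc⁻¹ ^ 2))) :=
    tendsto_const_nhds.div ((tendsto_taubNutH_atTop gc).const_mul _) (by simp [hgc])
  simpa [hgc] using h

theorem statement8 (gc β : ℝ) (hgc : gc ≠ 0) :
    (∀ r θ : ℝ, 0 < r →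
      -- `g̃₀₀ = H` and `g̃₀₁ = −βH′/(g²H)`
      buscher (gTN gc r θ) (bOmega gc β r θ) 0 0 = taubNutH gc r ∧
      buscher (gTN gc r θ) (bOmega gc β r θ) 0 1 =
        -(β * deriv (taubNutH gc) r) / (gc ^ 2 * taubNutH gc r) ∧
      -- `g̃ = Γ*(g_H)`: the pullback identity `g̃ = Jᵀ g_H J`, i.e. `Γ` is an isometric
      -- diffeomorphism from `(ℝ³ × S¹, g_H)` to `(ℝ³ × S¹, g̃)`, and equally
      -- `g̃ = Λ*(g_H(·,·,·, κ̃ + β))` since `g_H` is invariant under the constant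
      -- shift `κ ↦ κ + β` and `Λ` has the same Jacobian as `Γ`
      buscher (gTN gc r θ) (bOmega gc β r θ) =
        (jacGamma gc β r).transpose * gH gc r θ * jacGamma gc β r) ∧
    -- as `r → ∞` the shift `β/(g²H(r))` of `Γ` tends to `β`, i.e. `Γ` approaches the
    -- isometry `κ ↦ κ + β`
    Filter.Tendsto (fun r => β / (gc ^ 2 * taubNutH gc r)) Filter.atTop (nhds β) ∧
    -- while the shift `β/(g²H(r)) − β` of `Λ` tends to `0`, i.e. `Λ` approaches the
    -- identity
    Filter.Tendsto (fun r => β / (gc ^ 2 * taubNutH gc r) - β) Filter.atTop (nhds 0) := by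
  refine ⟨fun r θ hr => ?_, tendsto_div_taubNutH_atTop hgc β, ?_⟩
  · have hH := (taubNutH_pos gc hr).ne'
    refine ⟨by simp [buscher, gTN], ?_, ?_⟩
    · simp [buscher, bOmega, gTN]
      field_simp
    · rw [buscher_eq_transpose_mul_mul _ _ _ (bOmega_row_zero gc β r θ), buscher_gTN_zero gc hr,
        jacGamma_eq_one_add_single, deriv_div_taubNutH hgc β hr]
  · simpa using (tendsto_div_taubNutH_atTop hgc β).sub_const β
end
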